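/- Let l = 1 and let Λ = Λ_v be a fundamental weight. A partition λ (regarded as a 1-multipartition of highest weight Λ_v) belongs to 𝒴(Λ_v) if and only if λ is n-regular, i.e., for every k > 0 the number of parts of λ equal to k is strictly less than n. -/

import Mathlib

open scoped BigOperators

namespace BF

/-- The fundamental weight `Λ_i`, viewed as the indicator function `ZMod n → ℤ` of `i`. -/
def Lam (n : ℕ) (i : ZMod n) : ZMod n → ℤ := fun j => if j = i then 1 else 0

/-- A weight is dominant if all its coefficients are nonnegative. -/
def Dominant (n : ℕ) (a : ZMod n → ℤ) : Prop := ∀ i, 0 ≤ a i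

/-- The step weight of `e : ZMod n → ℕ`: its `Λ_j`-coefficient is `e (j-1) - e j`. -/
def stepWt (n : ℕ) (e : ZMod n → ℕ) : ZMod n → ℤ := fun j => (e (j - 1) : ℤ) - (e j : ℤ)

/-- Membership in `A_l^+`: `d` is the step weight of some `e : ZMod n → ℕ` of total sum `l`. -/
def InA (n : ℕ) [NeZero n] (l : ℕ) (d : ZMod n → ℤ) : Prop :=
  ∃ e : ZMod n → ℕ, (∑ i, e i) = l ∧ d = stepWt n e

/-- The ground-state path of the weight `Λ`: `p̄_k (i) = Λ (i - k)`,
which is the coefficient form of `p̄_k = Λ_{v₀+k} + ⋯ + Λ_{v_{l-1}+k}`. -/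
def gsp (n : ℕ) (Λ : ZMod n → ℤ) (k : ℕ) : ZMod n → ℤ := fun i => Λ (i - (k : ZMod n))

/-- `p` is a `Λ`-path of level `l`. -/
def IsPath (n : ℕ) [NeZero n] (l : ℕ) (Λ : ZMod n → ℤ) (p : ℕ → ZMod n → ℤ) : Prop :=
  (∀ k, InA n l (fun i => p (k + 1) i - p k i)) ∧ ∃ K, ∀ k ≥ K, p k = gsp n Λ k

/-- The length of a `Λ`-path: least `K` with `p k = p̄ k` for all `k ≥ K`. -/
noncomputable def pathLen (n : ℕ) (Λ : ZMod n → ℤ) (p : ℕ → ZMod n → ℤ) : ℕ :=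
  sInf {K | ∀ k ≥ K, p k = gsp n Λ k}

/-- `f : ℕ → ℕ` is a partition (rows are indexed from `0`). -/
def IsPartitionF (f : ℕ → ℕ) : Prop := (∀ i, f (i + 1) ≤ f i) ∧ ∃ N, ∀ i ≥ N, f i = 0

/-- An `l`-multipartition. -/
def IsMP (l : ℕ) (lam : Fin l → ℕ → ℕ) : Prop := ∀ j, IsPartitionF (lam j)

/-- The data `v : Fin l → ℕ` of a decomposition `Λ = Λ_{v 0} + ⋯ + Λ_{v (l-1)}`
with `0 ≤ v 0 ≤ ⋯ ≤ v (l-1) < n`. -/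
def SortedV (n l : ℕ) (v : Fin l → ℕ) : Prop := Monotone v ∧ ∀ j, v j < n

/-- The weight `Λ = Λ_{v 0} + ⋯ + Λ_{v (l-1)}` determined by `v`. -/
def wtOf (n : ℕ) {l : ℕ} (v : Fin l → ℕ) : ZMod n → ℤ :=
  fun i => ((Finset.univ.filter fun j : Fin l => ((v j : ZMod n) = i)).card : ℤ)

/-- The colour of the node in (0-based) row `i`, (1-based) column `c` of component `j`:
`(c - (i+1) + v j) mod n`. -/
def colour (n : ℕ) {l : ℕ} (v : Fin l → ℕ) (j : Fin l) (i c : ℕ) : ZMod n :=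
  (c : ZMod n) - (i : ZMod n) - 1 + (v j : ZMod n)

/-- `N^r(λ)`: the total number of nodes of colour `r` in the multipartition `λ`. -/
noncomputable def Ncolour (n : ℕ) {l : ℕ} (v : Fin l → ℕ) (lam : Fin l → ℕ → ℕ)
    (r : ZMod n) : ℕ :=
  Nat.card {x : Fin l × ℕ × ℕ //
    1 ≤ x.2.2 ∧ x.2.2 ≤ lam x.1 x.2.1 ∧ colour n v x.1 x.2.1 x.2.2 = r}

/-- The height `f′_m` of the `m`-th column of the partition `f`. -/
noncomputable def colHt (f : ℕ → ℕ) (m : ℕ) : ℕ := Nat.card {i : ℕ // m ≤ f i}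

/-- The function `e` whose step weight is the `k`-th step of `π(λ)`:
`e i = #{j : v j + k - λ^{(j)′}_{k+1} ≡ i mod n}`. -/
noncomputable def eFun (n : ℕ) {l : ℕ} (v : Fin l → ℕ) (lam : Fin l → ℕ → ℕ) (k : ℕ) :
    ZMod n → ℕ :=
  fun i => Nat.card {j : Fin l //
    (v j : ZMod n) + (k : ZMod n) - (colHt (lam j) (k + 1) : ZMod n) = i}

/-- `p = π(λ)` where `λ` is an `l`-multipartition of highest weight `wtOf n v`. -/
def IsPi (n : ℕ) {l : ℕ} (v : Fin l → ℕ) (lam : Fin l → ℕ → ℕ)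
    (p : ℕ → ZMod n → ℤ) : Prop :=
  (∀ k, (fun i => p (k + 1) i - p k i) = stepWt n (eFun n v lam k)) ∧
  ∃ K, ∀ k ≥ K, p k = gsp n (wtOf n v) k

/-- `λ` is cylindrical of highest weight `Λ = wtOf n v`. -/
def Cylindrical (n : ℕ) {l : ℕ} (v : Fin l → ℕ) (lam : Fin l → ℕ → ℕ) : Prop :=
  (∀ (j : ℕ) (hj : j + 1 < l) (i : ℕ),
      lam ⟨j + 1, hj⟩ (i + (v ⟨j + 1, hj⟩ - v ⟨j, Nat.lt_of_succ_lt hj⟩)) ≤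
        lam ⟨j, Nat.lt_of_succ_lt hj⟩ i) ∧
  ∀ (hl : 0 < l) (i : ℕ),
      lam ⟨0, hl⟩ (i + (n + v ⟨0, hl⟩ - v ⟨l - 1, Nat.sub_lt hl Nat.one_pos⟩)) ≤
        lam ⟨l - 1, Nat.sub_lt hl Nat.one_pos⟩ i

/-- `λ` is higher than `μ`: every column of each component of `λ` is at most as high as
the corresponding column of `μ`. -/
def Higher {l : ℕ} (lam mu : Fin l → ℕ → ℕ) : Prop :=
  ∀ (j : Fin l) (k : ℕ), 1 ≤ k → colHt (lam j) k ≤ colHt (mu j) k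

/-- `λ` is the highest-lift of the path `p`: it is a cylindrical multipartition with
`π(λ) = p` which is higher than every cylindrical multipartition mapping to `p`. -/
def IsHL (n : ℕ) {l : ℕ} (v : Fin l → ℕ) (lam : Fin l → ℕ → ℕ)
    (p : ℕ → ZMod n → ℤ) : Prop :=
  IsMP l lam ∧ Cylindrical n v lam ∧ IsPi n v lam p ∧
    ∀ mu : Fin l → ℕ → ℕ, IsMP l mu → Cylindrical n v mu → IsPi n v mu p → Higher lam mu

/-- `λ ∈ 𝒴(Λ)` with `Λ = wtOf n v`. -/
def InY (n : ℕ) {l : ℕ} (v : Fin l → ℕ) (lam : Fin l → ℕ → ℕ) : Prop :=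
  ∃ p, IsHL n v lam p

/-- `α′_r = -Λ_{r-1} + 2Λ_r - Λ_{r+1}`. -/
def alphaP (n : ℕ) (r : ZMod n) : ZMod n → ℤ :=
  fun i => -(Lam n (r - 1) i) + 2 * Lam n r i - Lam n (r + 1) i

/-- `ψ_r(k)`: the number of length-`k` rows of `λ` whose right end has colour `r`. -/
noncomputable def psiCount (n : ℕ) {l : ℕ} (v : Fin l → ℕ) (lam : Fin l → ℕ → ℕ)
    (k : ℕ) (r : ZMod n) : ℕ :=
  Nat.card {x : Fin l × ℕ // lam x.1 x.2 = k ∧ colour n v x.1 x.2 k = r}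

/-- The number of length-`k` rows of `λ` whose left end has colour `r`. -/
noncomputable def leftCount (n : ℕ) {l : ℕ} (v : Fin l → ℕ) (lam : Fin l → ℕ → ℕ)
    (k : ℕ) (r : ZMod n) : ℕ :=
  Nat.card {x : Fin l × ℕ // lam x.1 x.2 = k ∧ colour n v x.1 x.2 1 = r}

/-- The total number of length-`k` rows of `λ`. -/
noncomputable def rowCount {l : ℕ} (lam : Fin l → ℕ → ℕ) (k : ℕ) : ℕ :=
  Nat.card {x : Fin l × ℕ // lam x.1 x.2 = k}

/-- `m_r(k)`: the number of `r`-nodes of `λ` in column `k` or to its right. -/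
noncomputable def mCount (n : ℕ) {l : ℕ} (v : Fin l → ℕ) (lam : Fin l → ℕ → ℕ)
    (k : ℕ) (r : ZMod n) : ℕ :=
  Nat.card {x : Fin l × ℕ × ℕ //
    k ≤ x.2.2 ∧ x.2.2 ≤ lam x.1 x.2.1 ∧ colour n v x.1 x.2.1 x.2.2 = r}

/-- `p` is a `(Λ′,Λ″)`-restricted path, where `l''` is the level of `Λ″`:
`p - Λ′ ∈ 𝒫(Λ″)` and `p_k - η̂_k` is dominant for all `k`. -/
def IsRes (n : ℕ) [NeZero n] (l'' : ℕ) (L' L'' : ZMod n → ℤ) (p : ℕ → ZMod n → ℤ) : Prop :=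
  IsPath n l'' L'' (fun k i => p k i - L' i) ∧
  ∀ k, ∃ e : ZMod n → ℕ, (∑ i, e i) = l'' ∧
    (fun i => p (k + 1) i - p k i) = stepWt n e ∧ ∀ i, (e i : ℤ) ≤ p k i

/-- The length of a restricted path: `ℓ(p) = ℓ(p - Λ′)`. -/
noncomputable def resLen (n : ℕ) (L' L'' : ZMod n → ℤ) (p : ℕ → ZMod n → ℤ) : ℕ :=
  sInf {K | ∀ k ≥ K, (fun i => p k i - L' i) = gsp n L'' k}

/-- `♯Λ`. -/
def sharpWt (n : ℕ) (Λ : ZMod n → ℤ) : ZMod n → ℤ := fun i => Λ (-i)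

/-- `♯p`: `(♯p)_k (i) = a_{k-i}(k)` where `p_k = ∑ a_i(k) Λ_i`. -/
def sharpPath (n : ℕ) (p : ℕ → ZMod n → ℤ) : ℕ → ZMod n → ℤ :=
  fun k i => p k ((k : ZMod n) - i)

/-- `θ(a) = 1` if `a ≥ 0`, `0` otherwise. -/
def theta (a : ℤ) : ℕ := if 0 ≤ a then 1 else 0

/-- The function counting the entries of `μ : Fin l → ℕ` in each class mod `n`. -/
def cntF (n : ℕ) {l : ℕ} (μ : Fin l → ℕ) : ZMod n → ℕ :=
  fun i => (Finset.univ.filter fun j : Fin l => ((μ j : ZMod n) = i)).card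

/-- The energy function `H` on `A_l^+ × A_l^+`:
`H(α,β) = min_{σ ∈ S_l} ∑_j θ(μ_j - ν_{σ(j)})` where `α`, `β` are the step weights of
`Λ_{μ_0} + ⋯ + Λ_{μ_{l-1}}`, `Λ_{ν_0} + ⋯ + Λ_{ν_{l-1}}` with `0 ≤ μ_j, ν_j < n`. -/
noncomputable def Hfun (n : ℕ) (l : ℕ) (d d' : ZMod n → ℤ) : ℕ :=
  sInf {m | ∃ μ ν : Fin l → ℕ, (∀ j, μ j < n) ∧ (∀ j, ν j < n) ∧
    d = stepWt n (cntF n μ) ∧ d' = stepWt n (cntF n ν) ∧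
    m = Finset.univ.inf' ⟨1, Finset.mem_univ 1⟩
      fun σ : Equiv.Perm (Fin l) => ∑ j, theta ((μ j : ℤ) - (ν (σ j) : ℤ))}

/-- `(j, i)` is a removable `r`-node of `λ` (node at the right end of 0-based row `i`
of component `j`). -/
def RemNode (n : ℕ) {l : ℕ} (v : Fin l → ℕ) (lam : Fin l → ℕ → ℕ) (r : ZMod n)
    (j : Fin l) (i : ℕ) : Prop :=
  1 ≤ lam j i ∧ lam j (i + 1) < lam j i ∧ colour n v j i (lam j i) = r

/-- `(j, i)` is an addable `r`-node of `λ` (node addable at the end of 0-based row `i`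
of component `j`). -/
def AddNode (n : ℕ) {l : ℕ} (v : Fin l → ℕ) (lam : Fin l → ℕ → ℕ) (r : ZMod n)
    (j : Fin l) (i : ℕ) : Prop :=
  (i = 0 ∨ lam j i < lam j (i - 1)) ∧ colour n v j i (lam j i + 1) = r

/-- The diagonal number `d = c - (i+1) + v j` of the addable/removable node
`x = (j, i, isRemovable)`. -/
def nodeD {l : ℕ} (v : Fin l → ℕ) (lam : Fin l → ℕ → ℕ) (x : Fin l × ℕ × Bool) : ℤ :=
  (if x.2.2 then (lam x.1 x.2.1 : ℤ) else (lam x.1 x.2.1 : ℤ) + 1) - ((x.2.1 : ℤ) + 1) + (v x.1 : ℤ)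

/-- The total order on addable/removable nodes: `(d,j) < (d',j')` iff `d < d'`, or
`d = d'` and `j > j'`. -/
def nodeLT {l : ℕ} (v : Fin l → ℕ) (lam : Fin l → ℕ → ℕ) (x y : Fin l × ℕ × Bool) : Prop :=
  nodeD v lam x < nodeD v lam y ∨ (nodeD v lam x = nodeD v lam y ∧ (y.1 : ℕ) < (x.1 : ℕ))

/-- `L` is the `r`-signature of `λ`: the increasing list of all addable and removable
`r`-nodes (flag `true` = removable, `false` = addable). -/
def IsSig (n : ℕ) {l : ℕ} (v : Fin l → ℕ) (lam : Fin l → ℕ → ℕ) (r : ZMod n)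
    (L : List (Fin l × ℕ × Bool)) : Prop :=
  L.Pairwise (nodeLT v lam) ∧
  ∀ x : Fin l × ℕ × Bool, x ∈ L ↔
    ((x.2.2 = true ∧ RemNode n v lam r x.1 x.2.1) ∨
      (x.2.2 = false ∧ AddNode n v lam r x.1 x.2.1))

/-- One step of the reduction procedure on signature words: delete an adjacent pair
consisting of a removable node (`true`) immediately followed by an addable node (`false`). -/
inductive SigStep : List Bool → List Bool → Prop
  | pair (l₁ l₂ : List Bool) : SigStep (l₁ ++ true :: false :: l₂) (l₁ ++ l₂)
section Aux

lemma part_anti {f : ℕ → ℕ} (hf : IsPartitionF f) : Antitone f :=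
  antitone_nat_of_succ_le hf.1

lemma card_lt_nat (t : ℕ) : Nat.card {i : ℕ // i < t} = t := by
  have e : {i : ℕ // i < t} ≃ Fin t :=
    ⟨fun x => ⟨x.1, x.2⟩, fun x => ⟨x.1, x.2⟩, fun _ => rfl, fun _ => rfl⟩
  rw [Nat.card_congr e, Nat.card_eq_fintype_card, Fintype.card_fin]

lemma colHt_lt_iff {f : ℕ → ℕ} (hf : IsPartitionF f) {m : ℕ} (hm : 1 ≤ m) (i : ℕ) :
    i < colHt f m ↔ m ≤ f i := by
  obtain ⟨N, hN⟩ := hf.2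
  have hsub : {i : ℕ | m ≤ f i} ⊆ Set.Iio N := by
    intro j hj
    simp only [Set.mem_setOf_eq] at hj
    by_contra hjN
    simp only [Set.mem_Iio, not_lt] at hjN
    have := hN j hjN
    omega
  have hfin : {i : ℕ | m ≤ f i}.Finite := (Set.finite_Iio N).subset hsub
  have hcard : colHt f m = hfin.toFinset.card := by
    rw [colHt]
    exact (Nat.card_coe_set_eq _).trans (Set.ncard_eq_toFinset_card _ hfin)
  constructor
  · intro hi
    by_contra hfi
    push_neg at hfi
    have hsub2 : hfin.toFinset ⊆ Finset.range i := by
      intro j hj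
      rw [Set.Finite.mem_toFinset] at hj
      simp only [Set.mem_setOf_eq] at hj
      rw [Finset.mem_range]
      by_contra hji
      push_neg at hji
      have := part_anti hf hji
      omega
    have := Finset.card_le_card hsub2
    rw [Finset.card_range] at this
    omega
  · intro hi
    have hsub2 : Finset.range (i + 1) ⊆ hfin.toFinset := by
      intro j hj
      rw [Finset.mem_range] at hj
      rw [Set.Finite.mem_toFinset]
      simp only [Set.mem_setOf_eq]
      have := part_anti hf (Nat.lt_succ_iff.1 hj)
      omega
    have := Finset.card_le_card hsub2
    rw [Finset.card_range] at this
    omega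

lemma colHt_eq_of_iff {g : ℕ → ℕ} {m t : ℕ} (h : ∀ i, m ≤ g i ↔ i < t) :
    colHt g m = t := by
  rw [colHt, Nat.card_congr (Equiv.subtypeEquivRight fun i => (h i))]
  exact card_lt_nat t

lemma colHt_zero_of_lt {f : ℕ → ℕ} (hf : IsPartitionF f) {m : ℕ} (h : f 0 < m) :
    colHt f m = 0 := by
  refine colHt_eq_of_iff fun i => ?_
  simp only [Nat.not_lt_zero, iff_false, not_le]
  have := part_anti hf (Nat.zero_le i)
  omega

lemma colHt_anti {f : ℕ → ℕ} (hf : IsPartitionF f) {m m' : ℕ} (hm : 1 ≤ m)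
    (hmm : m ≤ m') : colHt f m' ≤ colHt f m := by
  rcases Nat.eq_zero_or_pos (colHt f m') with h0 | h0
  · omega
  · have hm' : 1 ≤ m' := le_trans hm hmm
    have h1 : m' ≤ f (colHt f m' - 1) := (colHt_lt_iff hf hm' _).1 (by omega)
    have h2 : colHt f m' - 1 < colHt f m := (colHt_lt_iff hf hm _).2 (by omega)
    omega

open Classical in
lemma card_fin1 (P : Fin 1 → Prop) : Nat.card {j : Fin 1 // P j} = if P 0 then 1 else 0 := by
  by_cases h : P 0
  · rw [if_pos h]
    haveI : Unique {j : Fin 1 // P j} :=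
      ⟨⟨⟨0, h⟩⟩, fun x => Subtype.ext (Subsingleton.elim _ _)⟩
    exact Nat.card_unique
  · rw [if_neg h]
    haveI : IsEmpty {j : Fin 1 // P j} :=
      ⟨fun x => h (by have := x.2; rwa [Fin.eq_zero x.1] at this)⟩
    exact Nat.card_of_isEmpty

lemma card_interval (a b : ℕ) : Nat.card {i : ℕ // a ≤ i ∧ i < b} = b - a := by
  have e : {i : ℕ // a ≤ i ∧ i < b} ≃ {i : ℕ // i < b - a} :=
    ⟨fun x => ⟨x.1 - a, by omega⟩, fun y => ⟨y.1 + a, by omega⟩,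
      fun x => Subtype.ext (by have := x.2; simp; omega),
      fun y => Subtype.ext (by simp)⟩
  rw [Nat.card_congr e, card_lt_nat]

lemma rowcount_eq {f : ℕ → ℕ} (hf : IsPartitionF f) {k : ℕ} (hk : 1 ≤ k) :
    Nat.card {i : ℕ // f i = k} = colHt f k - colHt f (k + 1) := by
  have h : ∀ i, f i = k ↔ (colHt f (k+1) ≤ i ∧ i < colHt f k) := by
    intro i
    have h1 := colHt_lt_iff hf hk i
    have h2 := colHt_lt_iff hf (by omega : 1 ≤ k+1) i
    omega
  rw [Nat.card_congr (Equiv.subtypeEquivRight h)]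
  exact card_interval _ _

end Aux
section Aux2

lemma filter_fin1 (P : Fin 1 → Prop) [DecidablePred P] :
    (Finset.univ.filter P).card = if P 0 then 1 else 0 := by
  have : (Finset.univ : Finset (Fin 1)) = {0} := by decide
  rw [this, Finset.filter_singleton]
  split <;> simp

lemma wtOf_fin1 (n : ℕ) (v : Fin 1 → ℕ) (x : ZMod n) :
    wtOf n v x = if (v 0 : ZMod n) = x then 1 else 0 := by
  rw [wtOf]
  rw [filter_fin1]
  split <;> simp_all

lemma eFun_fin1 (n : ℕ) [NeZero n] (v : Fin 1 → ℕ) (lam : Fin 1 → ℕ → ℕ) (k : ℕ) (i : ZMod n) :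
    eFun n v lam k i =
      if ((v 0 : ZMod n) + (k : ℕ) - ((colHt (lam 0) (k + 1) : ℕ) : ZMod n)) = i then 1
      else 0 := by
  rw [eFun, card_fin1]
  convert rfl using 2

lemma sum_indicator (n : ℕ) [NeZero n] (c : ZMod n) :
    ∑ i : ZMod n, (if c = i then (1 : ℕ) else 0) = 1 := by
  simp

lemma stepWt_inj (n : ℕ) [NeZero n] {e e' : ZMod n → ℕ}
    (hs : ∑ i, e i = ∑ i, e' i) (h : stepWt n e = stepWt n e') : e = e' := by
  set g : ZMod n → ℤ := fun j => (e j : ℤ) - (e' j : ℤ) with hg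
  have hstep : ∀ j : ZMod n, g (j - 1) = g j := by
    intro j
    have := congrFun h j
    simp only [stepWt] at this
    simp only [hg]
    omega
  have hconst : ∀ k : ℕ, g ((k : ℕ) : ZMod n) = g 0 := by
    intro k
    induction k with
    | zero => simp
    | succ m ih =>
      have := hstep ((m + 1 : ℕ) : ZMod n)
      push_cast at this ⊢
      rw [add_sub_cancel_right] at this
      rw [← this]
      push_cast at ih
      exact ih
  have hall : ∀ j : ZMod n, g j = g 0 := by
    intro j
    have := hconst j.val
    rwa [ZMod.natCast_val, ZMod.cast_id] at this
  have hsum : ∑ j : ZMod n, g j = 0 := by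
    simp only [hg]
    rw [Finset.sum_sub_distrib, sub_eq_zero]
    exact_mod_cast hs
  have hcardn : (Finset.univ : Finset (ZMod n)).card = n := by
    rw [Finset.card_univ, ZMod.card]
  rw [Finset.sum_congr rfl (fun j _ => hall j), Finset.sum_const, hcardn] at hsum
  have hn0 : g 0 = 0 := by
    have : (n : ℤ) ≠ 0 := by exact_mod_cast (NeZero.ne n)
    simpa [this, NeZero.ne n] using hsum
  funext j
  have := hall j
  rw [hn0] at this
  simp only [hg] at this
  omega

end Aux2
section Aux3

/-- The path `π(λ)` for `l = 1`, with first component `v0` and partition `f`. -/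
noncomputable def piPath (n : ℕ) (v0 : ℕ) (f : ℕ → ℕ) : ℕ → ZMod n → ℤ :=
  fun k i =>
    (if i = (v0 : ZMod n) + ((max k (f 0) : ℕ) : ZMod n) then 1 else 0)
    - ∑ m ∈ Finset.Ico k (f 0),
        ((if i = (v0 : ZMod n) + ((m + 1 : ℕ) : ZMod n) - ((colHt f (m + 1) : ℕ) : ZMod n)
            then 1 else 0)
         - (if i = (v0 : ZMod n) + ((m : ℕ) : ZMod n) - ((colHt f (m + 1) : ℕ) : ZMod n)
            then 1 else 0))

lemma piPath_gsp (n : ℕ) [NeZero n] (v : Fin 1 → ℕ) (f : ℕ → ℕ) (k : ℕ) (hk : f 0 ≤ k) :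
    piPath n (v 0) f k = gsp n (wtOf n v) k := by
  funext i
  rw [piPath, gsp, wtOf_fin1, Finset.Ico_eq_empty (by omega), Finset.sum_empty, sub_zero,
    Nat.max_eq_left hk]
  rcases eq_or_ne i ((v 0 : ZMod n) + ((k : ℕ) : ZMod n)) with h | h
  · rw [if_pos h, if_pos (by rw [h]; ring)]
  · rw [if_neg h, if_neg (fun hc => h (by linear_combination -hc))]

lemma piPath_step (n : ℕ) [NeZero n] (f : ℕ → ℕ) (hf : IsPartitionF f) (v0 k : ℕ)
    (i : ZMod n) :
    piPath n v0 f (k + 1) i - piPath n v0 f k i =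
      (if i = (v0 : ZMod n) + ((k + 1 : ℕ) : ZMod n) - ((colHt f (k + 1) : ℕ) : ZMod n)
        then 1 else 0)
      - (if i = (v0 : ZMod n) + ((k : ℕ) : ZMod n) - ((colHt f (k + 1) : ℕ) : ZMod n)
        then 1 else 0) := by
  rcases lt_or_ge k (f 0) with hk | hk
  · rw [piPath, piPath, Nat.max_eq_right hk.le, Nat.max_eq_right hk,
      Finset.sum_eq_sum_Ico_succ_bot hk]
    ring
  · have h0 : colHt f (k + 1) = 0 := colHt_zero_of_lt hf (by omega)
    rw [piPath, piPath, h0, Finset.Ico_eq_empty (by omega), Finset.Ico_eq_empty (by omega),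
      Nat.max_eq_left (by omega), Nat.max_eq_left hk]
    push_cast [sub_zero]
    ring

lemma stepWt_eFun (n : ℕ) [NeZero n] (v : Fin 1 → ℕ) (lam : Fin 1 → ℕ → ℕ) (k : ℕ)
    (i : ZMod n) :
    stepWt n (eFun n v lam k) i =
      (if i = (v 0 : ZMod n) + ((k + 1 : ℕ) : ZMod n) - ((colHt (lam 0) (k + 1) : ℕ) : ZMod n)
        then 1 else 0)
      - (if i = (v 0 : ZMod n) + ((k : ℕ) : ZMod n) - ((colHt (lam 0) (k + 1) : ℕ) : ZMod n)
        then 1 else 0) := by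
  show (eFun n v lam k (i - 1) : ℤ) - (eFun n v lam k i : ℤ) = _
  rw [eFun_fin1, eFun_fin1]
  have e1 : ((v 0 : ZMod n) + ((k : ℕ) : ZMod n) - ((colHt (lam 0) (k + 1) : ℕ) : ZMod n) = i - 1)
      ↔ (i = (v 0 : ZMod n) + ((k + 1 : ℕ) : ZMod n) - ((colHt (lam 0) (k + 1) : ℕ) : ZMod n)) := by
    push_cast
    constructor <;> intro hh <;> linear_combination -hh
  have e2 : ((v 0 : ZMod n) + ((k : ℕ) : ZMod n) - ((colHt (lam 0) (k + 1) : ℕ) : ZMod n) = i)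
      ↔ (i = (v 0 : ZMod n) + ((k : ℕ) : ZMod n) - ((colHt (lam 0) (k + 1) : ℕ) : ZMod n)) :=
    eq_comm
  simp only [e1, e2, Nat.cast_ite, Nat.cast_one, Nat.cast_zero]

lemma isPi_piPath (n : ℕ) [NeZero n] (v : Fin 1 → ℕ) (lam : Fin 1 → ℕ → ℕ)
    (hMP : IsMP 1 lam) : IsPi n v lam (piPath n (v 0) (lam 0)) := by
  constructor
  · intro k
    funext i
    show piPath n (v 0) (lam 0) (k + 1) i - piPath n (v 0) (lam 0) k i = _
    rw [piPath_step n (lam 0) (hMP 0) (v 0) k i, stepWt_eFun]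
  · exact ⟨lam 0 0, fun k hk => piPath_gsp n v (lam 0) k hk⟩

end Aux3
section Aux4

lemma cyl_fin1 (n : ℕ) (v : Fin 1 → ℕ) (la : Fin 1 → ℕ → ℕ) (hMP : IsMP 1 la) :
    Cylindrical n v la := by
  constructor
  · intro j hj
    exact absurd hj (by omega)
  · intro hl i
    have h1 : (⟨0, hl⟩ : Fin 1) = ⟨1 - 1, Nat.sub_lt hl Nat.one_pos⟩ := Subsingleton.elim _ _
    rw [h1]
    exact part_anti (hMP _) (Nat.le_add_right _ _)

lemma eFun_sum_one (n : ℕ) [NeZero n] (v : Fin 1 → ℕ) (la : Fin 1 → ℕ → ℕ) (m : ℕ) :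
    ∑ i, eFun n v la m i = 1 := by
  simp only [eFun_fin1]
  exact sum_indicator n _

lemma colHt_cast_eq (n : ℕ) [NeZero n] (v : Fin 1 → ℕ) (la mu : Fin 1 → ℕ → ℕ) (m : ℕ)
    (hE : eFun n v la m = eFun n v mu m) :
    ((colHt (la 0) (m + 1) : ℕ) : ZMod n) = ((colHt (mu 0) (m + 1) : ℕ) : ZMod n) := by
  have h := congrFun hE ((v 0 : ZMod n) + ((m : ℕ) : ZMod n)
    - ((colHt (la 0) (m + 1) : ℕ) : ZMod n))
  rw [eFun_fin1, eFun_fin1, if_pos rfl] at h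
  rcases eq_or_ne ((v 0 : ZMod n) + ((m : ℕ) : ZMod n) - ((colHt (mu 0) (m + 1) : ℕ) : ZMod n))
      ((v 0 : ZMod n) + ((m : ℕ) : ZMod n) - ((colHt (la 0) (m + 1) : ℕ) : ZMod n)) with hc | hc
  · linear_combination hc
  · rw [if_neg hc] at h
    exact absurd h one_ne_zero

end Aux4
section Aux5

lemma higher_of_regular (n : ℕ) [NeZero n] (v : Fin 1 → ℕ) (la mu : Fin 1 → ℕ → ℕ)
    (hla : IsPartitionF (la 0)) (hmu : IsPartitionF (mu 0))
    (hreg : ∀ k : ℕ, 0 < k → Nat.card {i : ℕ // la 0 i = k} < n)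
    (hE : ∀ m, eFun n v la m = eFun n v mu m) : Higher la mu := by
  intro j k hk
  rw [Fin.eq_zero j]
  suffices H : ∀ t ks, 1 ≤ ks → la 0 0 + 1 - ks ≤ t → colHt (la 0) ks ≤ colHt (mu 0) ks from
    H (la 0 0 + 1) k hk (by omega)
  intro t
  induction t with
  | zero =>
    intro ks h1 h2
    rw [colHt_zero_of_lt hla (by omega)]
    exact Nat.zero_le _
  | succ t ih =>
    intro ks h1 h2
    rcases le_or_gt (la 0 0 + 1) ks with hK | hK
    · rw [colHt_zero_of_lt hla (by omega)]
      exact Nat.zero_le _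
    · have ih' := ih (ks + 1) (by omega) (by omega)
      have hmono_mu : colHt (mu 0) (ks + 1) ≤ colHt (mu 0) ks := colHt_anti hmu h1 (by omega)
      have hmono_l : colHt (la 0) (ks + 1) ≤ colHt (la 0) ks := colHt_anti hla h1 (by omega)
      have hrc := hreg ks h1
      rw [rowcount_eq hla h1] at hrc
      have hcst := colHt_cast_eq n v la mu (ks - 1) (hE (ks - 1))
      have hks : ks - 1 + 1 = ks := by omega
      rw [hks] at hcst
      have hmod := (ZMod.natCast_eq_natCast_iff _ _ _).1 hcst
      have hdvd : (n : ℤ) ∣ (colHt (mu 0) ks : ℤ) - (colHt (la 0) ks : ℤ) := hmod.dvd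
      obtain ⟨d, hd⟩ := hdvd
      rcases le_or_gt (colHt (la 0) ks) (colHt (mu 0) ks) with hle | hlt
      · exact hle
      · exfalso
        have hn0 : (0 : ℤ) < (n : ℤ) := by exact_mod_cast Nat.pos_of_ne_zero (NeZero.ne n)
        have hd0 : d < 0 := by nlinarith [hd, hlt]
        have hnd : (n : ℤ) * d ≤ -(n : ℤ) := by nlinarith
        omega

end Aux5
section Aux6

lemma mu_construction (n : ℕ) [NeZero n] (f : ℕ → ℕ) (hf : IsPartitionF f) (k : ℕ)
    (hk : 0 < k) (hgap : colHt f (k + 1) + n ≤ colHt f k) :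
    ∃ g : ℕ → ℕ, IsPartitionF g ∧
      (∀ m, 1 ≤ m → ((colHt g m : ℕ) : ZMod n) = ((colHt f m : ℕ) : ZMod n)) ∧
      colHt g k + n ≤ colHt f k := by
  classical
  set c := colHt f (k + 1) with hc
  set g : ℕ → ℕ := fun i => if i < c then f i else f (i + n) with hg
  have hanti := part_anti hf
  have hmono : ∀ i, g (i + 1) ≤ g i := by
    intro i
    simp only [hg]
    split <;> split
    · exact hf.1 i
    · omega
    · exact hanti (by omega)
    · exact hanti (by omega)
  obtain ⟨N, hN⟩ := hf.2
  have hgpart : IsPartitionF g := by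
    refine ⟨hmono, N, fun i hi => ?_⟩
    simp only [hg]
    split
    · exact hN i hi
    · exact hN (i + n) (by omega)
  -- column heights of g
  have hcol : ∀ m, 1 ≤ m → colHt g m = if m ≤ k then colHt f m - n else colHt f m := by
    intro m hm
    rcases le_or_gt m k with hmk | hmk
    · rw [if_pos hmk]
      refine colHt_eq_of_iff fun i => ?_
      have hfm : colHt f k ≤ colHt f m := colHt_anti hf hm hmk
      simp only [hg]
      rcases lt_or_ge i c with h | h
      · rw [if_pos h]
        have h1 : k + 1 ≤ f i := (colHt_lt_iff hf (by omega) i).1 (by omega)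
        constructor
        · intro _; omega
        · intro _; omega
      · rw [if_neg (by omega)]
        have h2 := colHt_lt_iff hf hm (i + n)
        constructor
        · intro hle; have := h2.2 hle; omega
        · intro hlt; exact h2.1 (by omega)
    · rw [if_neg (by omega)]
      refine colHt_eq_of_iff fun i => ?_
      have hfm : colHt f m ≤ colHt f (k + 1) := colHt_anti hf (by omega) (by omega)
      simp only [hg]
      rcases lt_or_ge i c with h | h
      · rw [if_pos h]
        exact ((colHt_lt_iff hf (by omega) i).symm)
      · rw [if_neg (by omega)]
        have h2 := colHt_lt_iff hf hm (i + n)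
        constructor
        · intro hle; have := h2.2 hle; omega
        · intro hlt; omega
  refine ⟨g, hgpart, ?_, ?_⟩
  · intro m hm
    rw [hcol m hm]
    split
    next h =>
      have hfm : colHt f k ≤ colHt f m := colHt_anti hf hm h
      have hnm : n ≤ colHt f m := by omega
      rw [Nat.cast_sub hnm]
      simp
    next h => rfl
  · rw [hcol k (by omega), if_pos le_rfl]
    omega

end Aux6
/-- for a fundamental weight `Λ_v` (level `l = 1`), `λ ∈ 𝒴(Λ_v)` iff
`λ` is `n`-regular. -/
theorem fundamental_highest_lift_iff_regular (n : ℕ) [NeZero n] (hn : 2 ≤ n)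
    (v : Fin 1 → ℕ) (hv : SortedV n 1 v) (lam : Fin 1 → ℕ → ℕ) (hMP : IsMP 1 lam) :
    InY n v lam ↔ ∀ k : ℕ, 0 < k → Nat.card {i : ℕ // lam 0 i = k} < n := by
  have hf : IsPartitionF (lam 0) := hMP 0
  constructor
  · rintro ⟨p, hMPl, hCyl, hPi, hmax⟩
    intro k hk
    by_contra hbad
    push_neg at hbad
    have hcc : colHt (lam 0) (k + 1) ≤ colHt (lam 0) k := colHt_anti hf (by omega) (by omega)
    have hgap : colHt (lam 0) (k + 1) + n ≤ colHt (lam 0) k := by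
      have := rowcount_eq hf (by omega : 1 ≤ k)
      omega
    obtain ⟨g, hgpart, hgcast, hglt⟩ := mu_construction n (lam 0) hf k hk hgap
    set mu : Fin 1 → ℕ → ℕ := fun _ => g with hmu
    have hMPmu : IsMP 1 mu := fun _ => hgpart
    have hgmu : ∀ m, colHt (mu 0) m = colHt g m := fun _ => rfl
    have hE : ∀ m, eFun n v lam m = eFun n v mu m := by
      intro m
      funext i
      rw [eFun_fin1, eFun_fin1]
      have hcst : ((colHt (mu 0) m.succ : ℕ) : ZMod n) = ((colHt (lam 0) m.succ : ℕ) : ZMod n) := by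
        rw [hgmu]
        exact hgcast (m + 1) (by omega)
      rw [show (m.succ : ℕ) = m + 1 from rfl] at hcst
      rw [hcst]
    have hPimu : IsPi n v mu p := by
      refine ⟨fun m => ?_, hPi.2⟩
      rw [hPi.1 m, hE m]
    have hH := hmax mu hMPmu (cyl_fin1 n v mu hMPmu) hPimu 0 k (by omega)
    rw [hgmu] at hH
    omega
  · intro hreg
    refine ⟨piPath n (v 0) (lam 0), hMP, cyl_fin1 n v lam hMP, isPi_piPath n v lam hMP, ?_⟩
    intro mu hMPmu hCylmu hPimu
    have hE : ∀ m, eFun n v lam m = eFun n v mu m := by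
      intro m
      refine stepWt_inj n (by rw [eFun_sum_one, eFun_sum_one]) ?_
      rw [← (isPi_piPath n v lam hMP).1 m, ← hPimu.1 m]
    exact higher_of_regular n v lam mu hf (hMPmu 0) hreg hE

end BF
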